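/- Let a, Λ > 0 and r_e, r_c > 0 with r_e ≠ r_c. With ξ = (Λa²/3)/(1+Λa²/3), g(ξ) = (√((1−ξ)/ξ)·arctan(√(ξ/(1−ξ))) − 1)/ξ, and trace quantities γ₀(r₀) = η²[(1−β²)+(ξ−β²)g(ξ)], γ₁(r₀) = η²(1−ξ) (η² = r₀²+a², β² = a²/η²) for r₀ ∈ {r_e, r_c}, writing γ₀ᵉ, γ₁ᵉ, γ₀ᶜ, γ₁ᶜ for the traces at r_e and r_c respectively, the horizon radii satisfy r_e² = γ₁ᵉ/(1−ξ) − (ξ/(1−ξ))·(γ₁ᶜγ₀ᵉ − γ₁ᵉγ₀ᶜ)/(γ₀ᵉ − γ₁ᵉ + γ₁ᶜ − γ₀ᶜ) and r_c² = γ₁ᶜ/(1−ξ) − (ξ/(1−ξ))·(γ₁ᶜγ₀ᵉ − γ₁ᵉγ₀ᶜ)/(γ₀ᵉ − γ₁ᵉ + γ₁ᶜ − γ₀ᶜ). -/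

import Mathlib

/-!
With `t = √(ξ/(1−ξ))` one has `ξ(1 + g(ξ)) = arctan t / t − 1/(1 + t²)`, which is positive because
`t/(1 + t²) < t/√(1 + t²) = sin (arctan t) < arctan t`. Writing `η² = r₀² + a²`, both traces are
affine in `η²`: `γ₀ = (1 + ξg)η² − a²(1 + g)` and `γ₁ = (1 − ξ)η²`. The cross ratio of two affine
functions evaluated at two distinct points is independent of the points, and here it equals
`a²(1 − ξ)/ξ`; the denominator is `ξ(1 + g)(η_e² − η_c²) ≠ 0`.
-/

/-- The function `g(ξ) = (√((1−ξ)/ξ)·arctan(√(ξ/(1−ξ))) − 1)/ξ`. -/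
noncomputable def gfun (ξ : ℝ) : ℝ :=
  (Real.sqrt ((1 - ξ) / ξ) * Real.arctan (Real.sqrt (ξ / (1 - ξ))) - 1) / ξ

theorem Real.div_one_add_sq_lt_arctan {t : ℝ} (ht : 0 < t) : t / (1 + t ^ 2) < Real.arctan t :=
  calc t / (1 + t ^ 2) < t / √(1 + t ^ 2) :=
        div_lt_div_of_pos_left ht (by positivity)
          (Real.sqrt_lt_self_iff.2 (by nlinarith))
    _ = Real.sin (Real.arctan t) := (Real.sin_arctan t).symm
    _ < Real.arctan t := Real.sin_lt (Real.arctan_pos.2 ht)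

theorem one_add_gfun_pos {ξ : ℝ} (h0 : 0 < ξ) (h1 : ξ < 1) : 0 < 1 + gfun ξ := by
  set t := √(ξ / (1 - ξ))
  have h1ξ : 0 < 1 - ξ := sub_pos.2 h1
  have ht0 : 0 < t := Real.sqrt_pos.2 (div_pos h0 h1ξ)
  have hsq : t ^ 2 = ξ / (1 - ξ) := Real.sq_sqrt (div_pos h0 h1ξ).le
  have hinv : √((1 - ξ) / ξ) = t⁻¹ := by rw [← inv_div, Real.sqrt_inv]
  have hlow : t⁻¹ * (t / (1 + t ^ 2)) = 1 - ξ := by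
    rw [hsq]
    field_simp
    ring
  have harc := mul_lt_mul_of_pos_left (Real.div_one_add_sq_lt_arctan ht0) (inv_pos.2 ht0)
  rw [gfun, hinv, one_add_div h0.ne']
  exact div_pos (by linarith) h0

theorem cross_ratio_of_affine {p q s x y : ℝ} (hxy : x ≠ y) (hps : p ≠ s) :
    (s * y * (p * x + q) - s * x * (p * y + q)) / (p * x + q - s * x + s * y - (p * y + q))
      = s * q / (s - p) := by
  have hden : p * x + q - s * x + s * y - (p * y + q) = (p - s) * (x - y) := by ring
  rw [hden, div_eq_div_iff (mul_ne_zero (sub_ne_zero.2 hps) (sub_ne_zero.2 hxy))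
    (sub_ne_zero.2 hps.symm)]
  ring

theorem mul_trace_zero_eq_affine {a ξ G η : ℝ} (hη : η ≠ 0) :
    η * ((1 - a ^ 2 / η) + (ξ - a ^ 2 / η) * G) = (1 + ξ * G) * η + -(a ^ 2 * (1 + G)) := by
  field_simp
  ring

/-- Spectral formulae for the horizon radii:
`r_{e,c}² = γ₁^{e,c}/(1−ξ) − (ξ/(1−ξ))·(γ₁ᶜγ₀ᵉ − γ₁ᵉγ₀ᶜ)/(γ₀ᵉ − γ₁ᵉ + γ₁ᶜ − γ₀ᶜ)`. -/
theorem stmt_15 (a Λ re rc : ℝ) (ha : 0 < a) (hΛ : 0 < Λ)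
    (hre : 0 < re) (hrc : 0 < rc) (hne : re ≠ rc)
    (ξ γ0e γ1e γ0c γ1c : ℝ)
    (hξ : ξ = (Λ * a ^ 2 / 3) / (1 + Λ * a ^ 2 / 3))
    (hγ0e : γ0e = (re ^ 2 + a ^ 2) *
      ((1 - a ^ 2 / (re ^ 2 + a ^ 2)) + (ξ - a ^ 2 / (re ^ 2 + a ^ 2)) * gfun ξ))
    (hγ1e : γ1e = (re ^ 2 + a ^ 2) * (1 - ξ))
    (hγ0c : γ0c = (rc ^ 2 + a ^ 2) *
      ((1 - a ^ 2 / (rc ^ 2 + a ^ 2)) + (ξ - a ^ 2 / (rc ^ 2 + a ^ 2)) * gfun ξ))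
    (hγ1c : γ1c = (rc ^ 2 + a ^ 2) * (1 - ξ)) :
    re ^ 2 = γ1e / (1 - ξ) - (ξ / (1 - ξ)) *
        ((γ1c * γ0e - γ1e * γ0c) / (γ0e - γ1e + γ1c - γ0c)) ∧
    rc ^ 2 = γ1c / (1 - ξ) - (ξ / (1 - ξ)) *
        ((γ1c * γ0e - γ1e * γ0c) / (γ0e - γ1e + γ1c - γ0c)) := by
  have hξ0 : 0 < ξ := hξ ▸ by positivity
  have hξ1 : ξ < 1 := by rw [hξ, div_lt_one (by positivity)]; linarith
  have hslope : 1 + ξ * gfun ξ ≠ 1 - ξ := by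
    nlinarith [mul_pos hξ0 (one_add_gfun_pos hξ0 hξ1)]
  have hη : re ^ 2 + a ^ 2 ≠ rc ^ 2 + a ^ 2 := by
    simpa [pow_left_inj₀ hre.le hrc.le two_ne_zero] using hne
  rw [mul_trace_zero_eq_affine (by positivity)] at hγ0e hγ0c
  have hratio : (γ1c * γ0e - γ1e * γ0c) / (γ0e - γ1e + γ1c - γ0c) = a ^ 2 * (1 - ξ) / ξ := by
    rw [hγ0e, hγ0c, hγ1e, hγ1c, mul_comm (rc ^ 2 + a ^ 2), mul_comm (re ^ 2 + a ^ 2),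
      cross_ratio_of_affine hη hslope]
    field_simp
    ring
  have hrecover (r : ℝ) :
      r ^ 2 = (r ^ 2 + a ^ 2) * (1 - ξ) / (1 - ξ) - ξ / (1 - ξ) * (a ^ 2 * (1 - ξ) / ξ) := by
    have : 1 - ξ ≠ 0 := by linarith
    field_simp
    ring
  rw [hratio, hγ1e, hγ1c]
  exact ⟨hrecover re, hrecover rc⟩
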